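/- arXiv:2005.04744 — 4 statements merged into one kernel-verified Lean document; each statement's English description precedes it below -/
import Mathlib

section
/- Consider the real recursion κ₁ = c with 0 < c < 1/4 and κ_{i+1} = c(1 + κ_i)². Then the sequence (κ_i) is strictly increasing and converges to κ = 2c / (1 - 2c + √(1 - 4c)), and κ < 1, and κ_i < κ for all i ≥ 1. -/
/-!
Write `f x = c (1 + x)²` and `K = 2c / (1 - 2c + √(1 - 4c))`, the smaller root of `f x = x`, which
lies in `(0, 1)`. Subtracting `f K = K` gives `f x - x = (K - x) (1 - 2c - c (x + K))`, positive for
`x < K` because `c (x + K) < 2c < 1 - 2c`; and `f` is increasing on `[-1, ∞)`, so `f x < f K = K`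
there. Hence the orbit `c = f 0, f c, …` increases and stays below `K`; its limit is a fixed point
of `f` in `(0, K]`, which can only be `K`.
-/

open Filter Topology Set

section Orbit

variable {f : ℝ → ℝ} {a K : ℝ} {u : ℕ → ℝ}

theorem orbit_mem_Ico (hfK : ∀ x ∈ Ico a K, x < f x ∧ f x < K)
    (hu : ∀ n, u (n + 1) = f (u n)) (h0 : u 0 ∈ Ico a K) (n : ℕ) : u n ∈ Ico a K := by
  induction n with
  | zero => exact h0
  | succ n ih =>
    obtain ⟨hlt, hltK⟩ := hfK _ ih
    rw [hu n]
    exact ⟨ih.1.trans hlt.le, hltK⟩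

theorem orbit_strictMono (hfK : ∀ x ∈ Ico a K, x < f x ∧ f x < K)
    (hu : ∀ n, u (n + 1) = f (u n)) (h0 : u 0 ∈ Ico a K) : StrictMono u :=
  strictMono_nat_of_lt_succ fun n => (hu n).symm ▸ (hfK _ (orbit_mem_Ico hfK hu h0 n)).1

theorem orbit_tendsto (hf : Continuous f) (hfK : ∀ x ∈ Ico a K, x < f x ∧ f x < K)
    (hu : ∀ n, u (n + 1) = f (u n)) (h0 : u 0 ∈ Ico a K) : Tendsto u atTop (𝓝 K) := by
  have hmem := orbit_mem_Ico hfK hu h0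
  have hmono := (orbit_strictMono hfK hu h0).monotone
  have hbdd : BddAbove (range u) := ⟨K, forall_mem_range.2 fun n => (hmem n).2.le⟩
  have hlim : Tendsto u atTop (𝓝 (⨆ n, u n)) := tendsto_atTop_ciSup hmono hbdd
  set L := ⨆ n, u n
  have hLK : L ≤ K := ciSup_le fun n => (hmem n).2.le
  have haL : a ≤ L := (hmem 0).1.trans (le_ciSup hbdd 0)
  have hfix : f L = L := by
    refine tendsto_nhds_unique ?_ ((tendsto_add_atTop_iff_nat 1).2 hlim)
    simpa only [hu, Function.comp_def] using (hf.tendsto L).comp hlim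
  obtain rfl | hLK := hLK.eq_or_lt
  · exact hlim
  · exact absurd hfix (hfK L ⟨haL, hLK⟩).1.ne'

end Orbit

noncomputable def kappaLimit (c : ℝ) : ℝ := 2 * c / (1 - 2 * c + √(1 - 4 * c))

section KappaLimit

variable {c : ℝ}

theorem kappaLimit_denom_pos (hc : c ≤ 1 / 4) : 0 < 1 - 2 * c + √(1 - 4 * c) := by
  linarith [Real.sqrt_nonneg (1 - 4 * c)]

theorem kappaLimit_pos (hc0 : 0 < c) (hc : c ≤ 1 / 4) : 0 < kappaLimit c :=
  div_pos (by linarith) (kappaLimit_denom_pos hc)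

theorem kappaLimit_lt_one (hc : c < 1 / 4) : kappaLimit c < 1 := by
  rw [kappaLimit, div_lt_one (kappaLimit_denom_pos hc.le)]
  linarith [Real.sqrt_nonneg (1 - 4 * c)]

theorem mul_one_add_kappaLimit_sq (hc : c ≤ 1 / 4) : c * (1 + kappaLimit c) ^ 2 = kappaLimit c := by
  have hd := kappaLimit_denom_pos hc
  have hs : √(1 - 4 * c) ^ 2 = 1 - 4 * c := Real.sq_sqrt (by linarith)
  rw [kappaLimit, one_add_div hd.ne', div_pow, mul_div_assoc', div_eq_div_iff (by positivity) hd.ne']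
  linear_combination c * (1 - 2 * c + √(1 - 4 * c)) * hs

theorem lt_mul_one_add_sq (hc0 : 0 < c) (hc : c < 1 / 4) {x : ℝ} (hx : x < kappaLimit c) :
    x < c * (1 + x) ^ 2 := by
  have hK1 := kappaLimit_lt_one hc
  have hfactor : 0 < 1 - 2 * c - c * (x + kappaLimit c) := by nlinarith
  nlinarith [mul_pos (sub_pos.2 hx) hfactor, mul_one_add_kappaLimit_sq hc.le]

theorem mul_one_add_sq_lt_kappaLimit (hc0 : 0 < c) (hc : c ≤ 1 / 4) {x : ℝ} (hx1 : -1 ≤ x)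
    (hx : x < kappaLimit c) : c * (1 + x) ^ 2 < kappaLimit c := by
  calc c * (1 + x) ^ 2 < c * (1 + kappaLimit c) ^ 2 := by gcongr; linarith
    _ = kappaLimit c := mul_one_add_kappaLimit_sq hc

end KappaLimit

/-- The recursion `κ₁ = c`, `κ_{i+1} = c(1 + κ_i)²` with `0 < c < 1/4`
is strictly increasing and converges to `κ = 2c / (1 - 2c + √(1 - 4c))`, with `κ < 1`
and `κ_i < κ` for all `i ≥ 1`. -/
theorem kappa_recursion_convergence (c : ℝ) (hc0 : 0 < c) (hc : c < 1/4)
    (κ : ℕ → ℝ) (h1 : κ 1 = c) (hrec : ∀ i ≥ 1, κ (i + 1) = c * (1 + κ i) ^ 2) :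
    (∀ i ≥ 1, κ i < κ (i + 1)) ∧
    Filter.Tendsto κ Filter.atTop
      (nhds (2 * c / (1 - 2 * c + Real.sqrt (1 - 4 * c)))) ∧
    2 * c / (1 - 2 * c + Real.sqrt (1 - 4 * c)) < 1 ∧
    (∀ i ≥ 1, κ i < 2 * c / (1 - 2 * c + Real.sqrt (1 - 4 * c))) := by
  have hstep : ∀ x ∈ Ico 0 (kappaLimit c),
      x < c * (1 + x) ^ 2 ∧ c * (1 + x) ^ 2 < kappaLimit c := fun x hx =>
    ⟨lt_mul_one_add_sq hc0 hc hx.2, mul_one_add_sq_lt_kappaLimit hc0 hc.le (by linarith [hx.1]) hx.2⟩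
  let u : ℕ → ℝ := fun n => κ (n + 1)
  have hu : ∀ n, u (n + 1) = c * (1 + u n) ^ 2 := fun n => hrec (n + 1) n.succ_pos
  have h0 : u 0 ∈ Ico 0 (kappaLimit c) :=
    ⟨by simp [u, h1, hc0.le], by simpa [u, h1] using (hstep 0 ⟨le_rfl, kappaLimit_pos hc0 hc.le⟩).2⟩
  refine ⟨fun i hi => ?_, (tendsto_add_atTop_iff_nat 1).1 (orbit_tendsto (by fun_prop) hstep hu h0),
    kappaLimit_lt_one hc, fun i hi => ?_⟩
  · obtain ⟨n, rfl⟩ := Nat.exists_eq_add_of_le' hi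
    exact orbit_strictMono hstep hu h0 n.lt_succ_self
  · obtain ⟨n, rfl⟩ := Nat.exists_eq_add_of_le' hi
    exact (orbit_mem_Ico hstep hu h0 n).2
end

section
/- Let E ∈ ℂ^{n×n} be Hermitian positive definite and let Δ_E ∈ ℂ^{n×n} be a perturbation such that E + Δ_E is invertible. Let Z₂₂ = U be the unitary polar factor of E + Δ_E (so E + Δ_E = U P with P Hermitian positive definite). If ‖Δ_E‖₂ < σ_min(E), then ‖U - I‖_F ≤ 2 ‖E^{-1}‖₂ ‖Δ_E‖_F. -/
open Matrix ComplexOrder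

/-- The Frobenius norm of a complex matrix. -/
noncomputable def frob {m n : Type*} [Fintype m] [Fintype n] (M : Matrix m n ℂ) : ℝ :=
  Real.sqrt (∑ i, ∑ j, ‖M i j‖ ^ 2)

/-- The spectral norm (largest singular value) of a complex matrix. -/
noncomputable def specNorm {ι : Type*} [Fintype ι] [DecidableEq ι]
    (M : Matrix ι ι ℂ) : ℝ :=
  ‖Matrix.toEuclideanCLM (𝕜 := ℂ) M‖

/-- The smallest singular value of a square complex matrix. -/
noncomputable def sigmaMin {ι : Type*} [Fintype ι] [DecidableEq ι]
    (M : Matrix ι ι ℂ) : ℝ :=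
  sInf {r | ∃ x : EuclideanSpace ℂ ι, ‖x‖ = 1 ∧ r = ‖Matrix.toEuclideanCLM (𝕜 := ℂ) M x‖}

/-!
Put `W = U - 1`. Since `P = Uᴴ (E + Δ)` is Hermitian, `W` solves the Sylvester equation
`E W + W P = Δ - Δᴴ U`. Pair it with `W` in the Frobenius inner product `re tr (Wᴴ ·)`:
the `W P` term contributes `re tr (W P Wᴴ) ≥ 0`, and writing `E = Bᴴ B` the `E W` term is
`‖B W‖_F² ≥ ‖W‖_F² / ‖B⁻¹‖₂² = ‖W‖_F² / ‖E⁻¹‖₂`. Cauchy–Schwarz then gives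
`‖W‖_F ≤ ‖E⁻¹‖₂ ‖Δ - Δᴴ U‖_F ≤ 2 ‖E⁻¹‖₂ ‖Δ‖_F`.
-/

-- `‖M‖` is the spectral norm, so `specNorm M = ‖M‖` by definition.
open scoped Matrix.Norms.L2Operator
open WithLp

section Frobenius

variable {m n : Type*} [Fintype m] [Fintype n]

lemma frob_eq_norm_toLp_vec (M : Matrix m n ℂ) : frob M = ‖toLp 2 M.vec‖ := by
  rw [frob, EuclideanSpace.norm_eq, Fintype.sum_prod_type, Finset.sum_comm]
  rfl

lemma inner_toLp_vec (A B : Matrix m n ℂ) :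
    inner ℂ (toLp 2 A.vec) (toLp 2 B.vec) = (Aᴴ * B).trace := by
  rw [EuclideanSpace.inner_toLp_toLp, dotProduct_comm, star_vec_dotProduct_vec]

lemma frob_sq (M : Matrix m n ℂ) : frob M ^ 2 = (Mᴴ * M).trace.re := by
  rw [frob_eq_norm_toLp_vec, ← inner_toLp_vec]
  exact (inner_self_eq_norm_sq (𝕜 := ℂ) _).symm

lemma frob_nonneg (M : Matrix m n ℂ) : 0 ≤ frob M := Real.sqrt_nonneg _

lemma re_trace_conjTranspose_mul_le (A B : Matrix m n ℂ) :
    (Aᴴ * B).trace.re ≤ frob A * frob B := by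
  rw [← inner_toLp_vec, frob_eq_norm_toLp_vec, frob_eq_norm_toLp_vec]
  exact re_inner_le_norm (𝕜 := ℂ) _ _

lemma frob_sub_le (A B : Matrix m n ℂ) : frob (A - B) ≤ frob A + frob B := by
  simpa only [frob_eq_norm_toLp_vec, vec_sub, toLp_sub] using norm_sub_le _ _

lemma frob_conjTranspose (M : Matrix m n ℂ) : frob Mᴴ = frob M := by
  rw [frob, frob, Finset.sum_comm]
  simp [conjTranspose_apply]

lemma frob_unitary_mul [DecidableEq m] {U : Matrix m m ℂ} (hU : Uᴴ * U = 1) (M : Matrix m n ℂ) :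
    frob (U * M) = frob M := by
  have h : (U * M)ᴴ * (U * M) = Mᴴ * M := by
    rw [conjTranspose_mul, Matrix.mul_assoc, ← Matrix.mul_assoc Uᴴ, hU, Matrix.one_mul]
  rw [← sq_eq_sq₀ (frob_nonneg _) (frob_nonneg _), frob_sq, frob_sq, h]

lemma frob_sq_eq_sum_col (M : Matrix m n ℂ) :
    frob M ^ 2 = ∑ j, ‖toLp 2 (fun i => M i j)‖ ^ 2 := by
  simp only [frob, EuclideanSpace.norm_eq]
  rw [Real.sq_sqrt (by positivity), Finset.sum_comm]
  refine Finset.sum_congr rfl fun j _ => ?_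
  rw [Real.sq_sqrt (by positivity)]

lemma frob_mul_le [DecidableEq m] {l : Type*} [Fintype l] (A : Matrix l m ℂ)
    (M : Matrix m n ℂ) : frob (A * M) ≤ ‖A‖ * frob M := by
  refine le_of_pow_le_pow_left₀ two_ne_zero (mul_nonneg (norm_nonneg A) (frob_nonneg M)) ?_
  rw [mul_pow, frob_sq_eq_sum_col, frob_sq_eq_sum_col, Finset.mul_sum]
  refine Finset.sum_le_sum fun j _ => ?_
  rw [← mul_pow]
  exact pow_le_pow_left₀ (norm_nonneg _) (l2_opNorm_mulVec A (toLp 2 fun i => M i j)) 2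

lemma frob_mul_unitary [DecidableEq m] {U : Matrix m m ℂ} (hU : U * Uᴴ = 1) (M : Matrix n m ℂ) :
    frob (M * U) = frob M := by
  rw [← frob_conjTranspose, conjTranspose_mul,
    frob_unitary_mul (by rwa [conjTranspose_conjTranspose]), frob_conjTranspose]

lemma re_trace_conjTranspose_mul_mul_nonneg {P : Matrix n n ℂ} (hP : P.PosSemidef)
    (W : Matrix m n ℂ) : 0 ≤ (Wᴴ * (W * P)).trace.re := by
  rw [trace_mul_comm]
  exact (Complex.le_def.1 (hP.mul_mul_conjTranspose_same W).trace_nonneg).1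

end Frobenius

section Sylvester

open scoped MatrixOrder

variable {ι : Type*} [Fintype ι] [DecidableEq ι]

lemma frob_sq_le_norm_inv_mul_re_trace {m : Type*} [Fintype m] {E : Matrix ι ι ℂ}
    (hE : E.PosDef) (W : Matrix ι m ℂ) :
    frob W ^ 2 ≤ ‖E⁻¹‖ * (Wᴴ * (E * W)).trace.re := by
  obtain ⟨B, hB, rfl⟩ :=
    CStarAlgebra.isStrictlyPositive_iff_eq_star_mul_self.mp hE.isStrictlyPositive
  have hBinv : B⁻¹ * B = 1 := nonsing_inv_mul B ((isUnit_iff_isUnit_det B).1 hB)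
  have hquad : (Wᴴ * (star B * B * W)).trace.re = frob (B * W) ^ 2 := by
    rw [frob_sq, conjTranspose_mul, star_eq_conjTranspose, Matrix.mul_assoc, Matrix.mul_assoc]
  have hnorm : ‖(star B * B)⁻¹‖ = ‖B⁻¹‖ ^ 2 := by
    rw [star_eq_conjTranspose, Matrix.mul_inv_rev, ← conjTranspose_nonsing_inv,
      ← l2_opNorm_conjTranspose B⁻¹, sq, ← l2_opNorm_conjTranspose_mul_self,
      conjTranspose_conjTranspose]
  have hW : frob W ≤ ‖B⁻¹‖ * frob (B * W) := by
    simpa only [← Matrix.mul_assoc, hBinv, Matrix.one_mul] using frob_mul_le B⁻¹ (B * W)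
  rw [hquad, hnorm, ← mul_pow]
  exact pow_le_pow_left₀ (frob_nonneg W) hW 2

lemma frob_le_of_mul_add_mul_eq {m : Type*} [Fintype m] {E : Matrix ι ι ℂ} {P : Matrix m m ℂ}
    {W C : Matrix ι m ℂ} (hE : E.PosDef) (hP : P.PosSemidef) (hC : E * W + W * P = C) :
    frob W ≤ ‖E⁻¹‖ * frob C := by
  have hsq : frob W ^ 2 ≤ frob W * (‖E⁻¹‖ * frob C) :=
    calc frob W ^ 2 ≤ ‖E⁻¹‖ * (Wᴴ * (E * W)).trace.re := frob_sq_le_norm_inv_mul_re_trace hE W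
      _ ≤ ‖E⁻¹‖ * (Wᴴ * C).trace.re := by
        rw [← hC, Matrix.mul_add, trace_add, Complex.add_re]
        gcongr
        exact le_add_of_nonneg_right (re_trace_conjTranspose_mul_mul_nonneg hP W)
      _ ≤ ‖E⁻¹‖ * (frob W * frob C) := by
        gcongr
        exact re_trace_conjTranspose_mul_le W C
      _ = frob W * (‖E⁻¹‖ * frob C) := by ring
  nlinarith [frob_nonneg W, mul_nonneg (norm_nonneg E⁻¹) (frob_nonneg C)]

end Sylvester

lemma polar_sylvester_eq {ι : Type*} [Fintype ι] [DecidableEq ι] {E Δ U P : Matrix ι ι ℂ}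
    (hE : E.IsHermitian) (hU : Uᴴ * U = 1) (hP : P.IsHermitian) (hpolar : E + Δ = U * P) :
    E * (U - 1) + (U - 1) * P = Δ - Δᴴ * U := by
  have hP_eq : P = Uᴴ * (E + Δ) := by rw [hpolar, ← Matrix.mul_assoc, hU, Matrix.one_mul]
  have hP_eq' : P = E * U + Δᴴ * U := by
    rw [← hP.eq, hP_eq, conjTranspose_mul, conjTranspose_conjTranspose, conjTranspose_add,
      hE.eq, Matrix.add_mul]
  calc E * (U - 1) + (U - 1) * P = E * U - E + (U * P - P) := by
        rw [Matrix.mul_sub, Matrix.sub_mul, Matrix.mul_one, Matrix.one_mul]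
    _ = Δ - Δᴴ * U := by rw [← hpolar, hP_eq']; abel

theorem polar_factor_near_identity_general (n : ℕ) (E Δ U P : Matrix (Fin n) (Fin n) ℂ)
    (hE : E.PosDef) (hU : Uᴴ * U = 1 ∧ U * Uᴴ = 1) (hP : P.PosDef)
    (hpolar : E + Δ = U * P) :
    frob (U - 1) ≤ 2 * specNorm E⁻¹ * frob Δ := by
  have hsylv := polar_sylvester_eq hE.isHermitian hU.1 hP.isHermitian hpolar
  calc frob (U - 1) ≤ specNorm E⁻¹ * frob (Δ - Δᴴ * U) :=
        frob_le_of_mul_add_mul_eq hE hP.posSemidef hsylv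
    _ ≤ specNorm E⁻¹ * (frob Δ + frob Δ) := by
        gcongr
        · exact norm_nonneg _
        · simpa only [frob_mul_unitary hU.2, frob_conjTranspose] using frob_sub_le Δ (Δᴴ * U)
    _ = 2 * specNorm E⁻¹ * frob Δ := by ring

/-- If `E` is Hermitian positive definite, `E + Δ` is invertible with
unitary polar factor `U` (so `E + Δ = U P`, `P` Hermitian positive definite), and
`‖Δ‖₂ < σ_min(E)`, then `‖U - I‖_F ≤ 2 ‖E⁻¹‖₂ ‖Δ‖_F`. -/
theorem polar_factor_near_identity (n : ℕ) (E Δ U P : Matrix (Fin n) (Fin n) ℂ)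
    (hE : E.PosDef) (hinv : IsUnit (E + Δ).det)
    (hU : Uᴴ * U = 1 ∧ U * Uᴴ = 1) (hP : P.PosDef)
    (hpolar : E + Δ = U * P)
    (hsmall : specNorm Δ < sigmaMin E) :
    frob (U - 1) ≤ 2 * specNorm E⁻¹ * frob Δ :=
  polar_factor_near_identity_general n E Δ U P hE hU hP hpolar
end

section
/- Let 𝓥 ∈ ℂ^{(n+m)×(n+m)} be skew-Hermitian with block form [[J, G], [-G^H, N]] and 𝓦 ∈ ℂ^{(n+m)×(n+m)} be Hermitian with block form [[R, P], [P^H, S]]. Setting A = J - R, B = G - P, C^H = G + P, D = S - N, the matrix [[-R, -J, G], [-J^H, R, -P], [G^H, -P^H, S]] is the congruence transform X̂^H [[0, A, B], [A^H, 0, C^H], [B^H, C, D^H + D]] X̂ where X̂ = diag((1/√2)[[I, I], [I, -I]], (1/√2)I_m). -/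
/-!
With `T = [[I, I], [I, -I]] = Tᴴ` one has
`T [[0, A], [E, 0]] T = [[A + E, E - A], [A - E, -(A + E)]]`, `T [B; E] = [B + E; B - E]` and
`[F, E] T = [F + E, F - E]`. For `A = J - R` with `J` skew-Hermitian and `R` Hermitian,
`A + Aᴴ = -2R` and `A - Aᴴ = 2J`; likewise `B + Cᴴ = 2G`, `B - Cᴴ = -2P` and `Dᴴ + D = 2S`.
The factor `(1/√2)² = 1/2` of the congruence cancels these 2s.
-/

open Matrix

namespace Matrix

variable {α β : Type*} {l m n o : Type*}

theorem conjTranspose_eq_neg_of_fromBlocks [AddGroup α] [StarAddMonoid α]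
    {A : Matrix m m α} {B : Matrix m n α} {C : Matrix n m α} {D : Matrix n n α}
    (h : (fromBlocks A B C D)ᴴ = -fromBlocks A B C D) : Aᴴ = -A ∧ Dᴴ = -D := by
  rw [fromBlocks_conjTranspose, fromBlocks_neg] at h
  exact ⟨congr_arg toBlocks₁₁ h, congr_arg toBlocks₂₂ h⟩

theorem smul_fromRows [SMul α β] (c : α) (A₁ : Matrix m l β) (A₂ : Matrix n l β) :
    c • fromRows A₁ A₂ = fromRows (c • A₁) (c • A₂) := by
  ext (i | i) j <;> rfl

theorem smul_fromCols [SMul α β] (c : α) (A₁ : Matrix l m β) (A₂ : Matrix l n β) :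
    c • fromCols A₁ A₂ = fromCols (c • A₁) (c • A₂) := by
  ext i (j | j) <;> rfl

theorem conjTranspose_smul_mul_mul_smul [Fintype m] [Fintype n] [CommSemiring α] [StarRing α]
    (c : α) (X : Matrix m n α) (M : Matrix m m α) :
    (c • X)ᴴ * M * (c • X) = (star c * c) • (Xᴴ * M * X) := by
  rw [conjTranspose_smul, Matrix.smul_mul, Matrix.mul_smul, Matrix.smul_mul, smul_smul, mul_comm]

theorem conjTranspose_fromBlocks_diag_mul_mul [Fintype l] [Fintype o]
    [NonUnitalNonAssocSemiring α] [StarRing α]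
    (X : Matrix l m α) (Y : Matrix o n α) (M₁₁ : Matrix l l α) (M₁₂ : Matrix l o α)
    (M₂₁ : Matrix o l α) (M₂₂ : Matrix o o α) :
    (fromBlocks X 0 0 Y)ᴴ * fromBlocks M₁₁ M₁₂ M₂₁ M₂₂ * fromBlocks X 0 0 Y =
      fromBlocks (Xᴴ * M₁₁ * X) (Xᴴ * M₁₂ * Y) (Yᴴ * M₂₁ * X) (Yᴴ * M₂₂ * Y) := by
  simp [fromBlocks_conjTranspose, fromBlocks_multiply]

section Hadamard

variable [DecidableEq n] [Ring α]

theorem conjTranspose_fromBlocks_one_one_one_neg_one [StarRing α] :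
    (fromBlocks 1 1 1 (-1) : Matrix (n ⊕ n) (n ⊕ n) α)ᴴ = fromBlocks 1 1 1 (-1) := by
  simp [fromBlocks_conjTranspose]

variable [Fintype n]

theorem fromBlocks_one_one_one_neg_one_mul_fromBlocks_zero_mul (A E : Matrix n n α) :
    fromBlocks 1 1 1 (-1) * fromBlocks 0 A E 0 * fromBlocks 1 1 1 (-1) =
      fromBlocks (A + E) (E - A) (A - E) (-(A + E)) := by
  simp only [fromBlocks_multiply]
  congr 1 <;> noncomm_ring

theorem fromBlocks_one_one_one_neg_one_mul_fromRows [Fintype m] (B E : Matrix n m α) :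
    (fromBlocks 1 1 1 (-1) : Matrix (n ⊕ n) (n ⊕ n) α) * fromRows B E =
      fromRows (B + E) (B - E) := by
  rw [fromBlocks_mul_fromRows]
  simp only [Matrix.one_mul, Matrix.neg_mul, sub_eq_add_neg]

theorem fromCols_mul_fromBlocks_one_one_one_neg_one [Fintype m] (F E : Matrix m n α) :
    fromCols F E * (fromBlocks 1 1 1 (-1) : Matrix (n ⊕ n) (n ⊕ n) α) =
      fromCols (F + E) (F - E) := by
  rw [fromCols_mul_fromBlocks]
  simp only [Matrix.mul_one, Matrix.mul_neg, sub_eq_add_neg]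

end Hadamard

end Matrix

/-- With `𝓥 = [[J, G], [-Gᴴ, N]]` skew-Hermitian, `𝓦 = [[R, P], [Pᴴ, S]]`
Hermitian, and `A = J - R`, `B = G - P`, `Cᴴ = G + P`, `D = S - N`, the matrix
`[[-R, -J, G], [-Jᴴ, R, -P], [Gᴴ, -Pᴴ, S]]` equals the congruence transform
`Xhᴴ [[0, A, B], [Aᴴ, 0, Cᴴ], [Bᴴ, C, Dᴴ + D]] Xh`, where
`Xh = diag((1/√2)[[I, I], [I, -I]], (1/√2) I_m)`. -/
theorem pH_congruence_identity (n m : ℕ)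
    (J R : Matrix (Fin n) (Fin n) ℂ) (G P : Matrix (Fin n) (Fin m) ℂ)
    (N S : Matrix (Fin m) (Fin m) ℂ)
    (h𝓥 : (Matrix.fromBlocks J G (-Gᴴ) N)ᴴ = -(Matrix.fromBlocks J G (-Gᴴ) N))
    (h𝓦 : (Matrix.fromBlocks R P Pᴴ S)ᴴ = Matrix.fromBlocks R P Pᴴ S)
    (A : Matrix (Fin n) (Fin n) ℂ) (hA : A = J - R)
    (B : Matrix (Fin n) (Fin m) ℂ) (hB : B = G - P)
    (C : Matrix (Fin m) (Fin n) ℂ) (hC : Cᴴ = G + P)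
    (D : Matrix (Fin m) (Fin m) ℂ) (hD : D = S - N)
    (Xh : Matrix ((Fin n ⊕ Fin n) ⊕ Fin m) ((Fin n ⊕ Fin n) ⊕ Fin m) ℂ)
    (hXh : Xh = Matrix.fromBlocks
      (((Real.sqrt 2 : ℂ))⁻¹ • Matrix.fromBlocks 1 1 1 (-1)) 0 0
      (((Real.sqrt 2 : ℂ))⁻¹ • 1)) :
    Matrix.fromBlocks (Matrix.fromBlocks (-R) (-J) (-Jᴴ) R)
        (Matrix.fromRows G (-P)) (Matrix.fromCols Gᴴ (-Pᴴ)) S =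
      Xhᴴ * Matrix.fromBlocks (Matrix.fromBlocks 0 A Aᴴ 0)
        (Matrix.fromRows B Cᴴ) (Matrix.fromCols Bᴴ C) (Dᴴ + D) * Xh := by
  obtain ⟨hJ, hN⟩ := conjTranspose_eq_neg_of_fromBlocks h𝓥
  obtain ⟨hR, -, -, hS⟩ := isHermitian_fromBlocks_iff.mp h𝓦
  have hC' : C = Gᴴ + Pᴴ := by
    rw [← conjTranspose_conjTranspose C, hC, conjTranspose_add]
  have hc : star ((Real.sqrt 2 : ℂ))⁻¹ * ((Real.sqrt 2 : ℂ))⁻¹ = 2⁻¹ := by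
    rw [Complex.star_def, map_inv₀, Complex.conj_ofReal, ← mul_inv, ← Complex.ofReal_mul,
      Real.mul_self_sqrt zero_le_two, Complex.ofReal_ofNat]
  have hXh' : Xh = ((Real.sqrt 2 : ℂ))⁻¹ • fromBlocks (fromBlocks 1 1 1 (-1)) 0 0 1 := by
    simp only [hXh, fromBlocks_smul, smul_zero]
  rw [hXh', conjTranspose_smul_mul_mul_smul, hc, conjTranspose_fromBlocks_diag_mul_mul]
  simp only [conjTranspose_fromBlocks_one_one_one_neg_one, conjTranspose_one, Matrix.one_mul,
    Matrix.mul_one, fromBlocks_one_one_one_neg_one_mul_fromBlocks_zero_mul,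
    fromBlocks_one_one_one_neg_one_mul_fromRows, fromCols_mul_fromBlocks_one_one_one_neg_one,
    fromBlocks_smul, smul_fromRows, smul_fromCols]
  subst hA hB hD hC'
  simp only [conjTranspose_sub, conjTranspose_add, conjTranspose_conjTranspose,
    hJ, hN, hR.eq, hS.eq]
  congr 1
  · congr 1 <;> module
  · congr 1 <;> module
  · congr 1 <;> module
  · module
end

section
/- Let A_Δ, E_Δ ∈ ℂ^{n×n} and suppose the pencils sE_Δ - A_Δ and -sE_Δ^H - A_Δ^H have no common eigenvalues (including infinity). Then for any skew-Hermitian Δ^𝓔₁₁ and Hermitian Δ^𝓐₁₁ in ℂ^{n×n}, there exists a unique Y₂₁ ∈ ℂ^{n×n} solving the coupled linear equations A_Δ Y₂₁ + Y₂₁^H A_Δ^H = -Δ^𝓐₁₁ and E_Δ Y₂₁ - Y₂₁^H E_Δ^H = -Δ^𝓔₁₁. -/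
/-!
Substituting `Z = E_Δ Y` and `M = A_Δ E_Δ⁻¹` turns the system into `M Z + Zᴴ Mᴴ = -Δ𝓐`,
`Z - Zᴴ = -Δ𝓔`. The second equation fixes the skew-Hermitian part of `Z` to be `-Δ𝓔 / 2`, and
the first then becomes a Lyapunov equation `M H + H Mᴴ = C` with Hermitian right-hand side for
the Hermitian part `H`. The spectral hypothesis says exactly that `M` and `-Mᴴ` have disjoint
spectra, so by Sylvester's theorem the operator `X ↦ M X + X Mᴴ` is bijective: if `M B = B N`
then `χ_M(M) B = B χ_M(N)`, and `χ_M(N)` is invertible by the spectral mapping theorem. Its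
solution for a Hermitian `C` is Hermitian, since `Hᴴ` solves the same equation.
-/

open Matrix Polynomial

theorem SemiconjBy.aeval {R A : Type*} [CommSemiring R] [Semiring A] [Algebra R A]
    {b x y : A} (h : SemiconjBy b x y) (p : R[X]) :
    SemiconjBy b (Polynomial.aeval x p) (Polynomial.aeval y p) := by
  induction p using Polynomial.induction_on' with
  | add p q hp hq => simpa only [map_add] using hp.add_right hq
  | monomial k r =>
    simpa only [aeval_monomial] using
      SemiconjBy.mul_right (Algebra.commute_algebraMap_right r b) (h.pow_right k)

namespace Matrix

variable {n K : Type*} [Fintype n] [DecidableEq n] [Field K]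

theorem isUnit_aeval_charpoly_of_disjoint_spectrum [IsAlgClosed K] [Nonempty n]
    {M N : Matrix n n K} (hMN : Disjoint (spectrum K M) (spectrum K N)) :
    IsUnit (aeval N M.charpoly) := by
  have hdeg : 0 < M.charpoly.degree := by
    rw [charpoly_degree_eq_dim, Nat.cast_pos]
    exact Fintype.card_pos
  rw [← spectrum.zero_notMem_iff K, spectrum.map_polynomial_aeval_of_degree_pos N _ hdeg]
  rintro ⟨μ, hμN, hμM⟩
  exact Set.disjoint_right.mp hMN hμN (mem_spectrum_iff_isRoot_charpoly.mpr hμM)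

theorem eq_zero_of_mul_eq_mul_of_disjoint_spectrum [IsAlgClosed K]
    {M N B : Matrix n n K} (hMN : Disjoint (spectrum K M) (spectrum K N))
    (h : M * B = B * N) : B = 0 := by
  cases isEmpty_or_nonempty n
  · exact Subsingleton.elim _ _
  have hB : B * aeval N M.charpoly = 0 := by
    rw [(SemiconjBy.aeval h.symm M.charpoly).eq, aeval_self_charpoly, zero_mul]
  exact (isUnit_aeval_charpoly_of_disjoint_spectrum hMN).mul_left_eq_zero.mp hB

theorem mem_spectrum_inv_mul_iff {F B : Matrix n n K} (hF : IsUnit F.det) (μ : K) :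
    μ ∈ spectrum K (F⁻¹ * B) ↔ (μ • F - B).det = 0 := by
  have hfactor : algebraMap K _ μ - F⁻¹ * B = F⁻¹ * (μ • F - B) := by
    rw [Algebra.algebraMap_eq_smul_one, Matrix.mul_sub, mul_smul_comm, nonsing_inv_mul F hF]
  rw [spectrum.mem_iff, hfactor, isUnit_iff_isUnit_det, det_mul, IsUnit.mul_iff,
    and_iff_right (isUnit_nonsing_inv_det F hF), isUnit_iff_ne_zero, not_not]

theorem mem_spectrum_mul_inv_iff {F B : Matrix n n K} (hF : IsUnit F.det) (μ : K) :
    μ ∈ spectrum K (B * F⁻¹) ↔ (μ • F - B).det = 0 := by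
  have hfactor : algebraMap K _ μ - B * F⁻¹ = (μ • F - B) * F⁻¹ := by
    rw [Algebra.algebraMap_eq_smul_one, Matrix.sub_mul, smul_mul_assoc, mul_nonsing_inv F hF]
  rw [spectrum.mem_iff, hfactor, isUnit_iff_isUnit_det, det_mul, IsUnit.mul_iff,
    and_iff_left (isUnit_nonsing_inv_det F hF), isUnit_iff_ne_zero, not_not]

def sylvesterMap (M N : Matrix n n K) : Matrix n n K →ₗ[K] Matrix n n K :=
  LinearMap.mulLeft K M - LinearMap.mulRight K N

@[simp]
theorem sylvesterMap_apply (M N X : Matrix n n K) : sylvesterMap M N X = M * X - X * N := rfl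

theorem sylvesterMap_bijective [IsAlgClosed K] {M N : Matrix n n K}
    (hMN : Disjoint (spectrum K M) (spectrum K N)) : Function.Bijective (sylvesterMap M N) := by
  have hinj : Function.Injective (sylvesterMap M N) := by
    refine (injective_iff_map_eq_zero _).mpr fun X hX => ?_
    exact eq_zero_of_mul_eq_mul_of_disjoint_spectrum hMN (sub_eq_zero.mp hX)
  exact ⟨hinj, LinearMap.injective_iff_surjective.mp hinj⟩

theorem isHermitian_of_injective_sylvesterMap [StarRing K] {M X : Matrix n n K}
    (hM : Function.Injective (sylvesterMap M (-Mᴴ)))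
    (hX : (sylvesterMap M (-Mᴴ) X).IsHermitian) : X.IsHermitian := by
  refine hM (Eq.trans ?_ hX)
  simp only [sylvesterMap_apply, conjTranspose_sub, conjTranspose_mul, conjTranspose_neg,
    conjTranspose_conjTranspose, mul_neg]
  abel

theorem existsUnique_coupled_of_bijective_sylvesterMap [StarRing K] [CharZero K]
    {M P S : Matrix n n K} (hM : Function.Bijective (sylvesterMap M (-Mᴴ)))
    (hP : P.IsHermitian) (hS : Sᴴ = -S) :
    ∃! Z : Matrix n n K, M * Z + Zᴴ * Mᴴ = -P ∧ Z - Zᴴ = -S := by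
  have hstar : star (2⁻¹ : K) = 2⁻¹ := by simp
  refine existsUnique_of_exists_of_unique ?_ ?_
  · -- `Z = H - S / 2` with `H` Hermitian solves the system iff `M H + H Mᴴ = C`.
    set C := -P + (2 : K)⁻¹ • (M * S - S * Mᴴ) with hC_def
    have hC : C.IsHermitian := by
      simp only [IsHermitian, hC_def, conjTranspose_add, conjTranspose_neg, hP.eq,
        conjTranspose_smul, hstar, conjTranspose_sub, conjTranspose_mul,
        conjTranspose_conjTranspose, hS, Matrix.mul_neg, Matrix.neg_mul]
      module
    obtain ⟨H, hH⟩ := hM.surjective C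
    have hHH : H.IsHermitian := isHermitian_of_injective_sylvesterMap hM.injective (hH ▸ hC)
    have hZ : (H - (2 : K)⁻¹ • S)ᴴ = H + (2 : K)⁻¹ • S := by
      rw [conjTranspose_sub, conjTranspose_smul, hstar, hHH.eq, hS, smul_neg, sub_neg_eq_add]
    refine ⟨H - (2 : K)⁻¹ • S, ?_, ?_⟩
    · rw [sylvesterMap_apply, Matrix.mul_neg, sub_neg_eq_add] at hH
      rw [hZ, Matrix.mul_sub, Matrix.add_mul, Matrix.mul_smul, Matrix.smul_mul]
      calc _ = (M * H + H * Mᴴ) - (2 : K)⁻¹ • (M * S - S * Mᴴ) := by module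
        _ = -P := by rw [hH, hC_def]; module
    · rw [hZ]
      module
  · rintro Z₁ Z₂ ⟨hA₁, hE₁⟩ ⟨hA₂, hE₂⟩
    have hZ₁ : Z₁ᴴ = Z₁ + S := by rw [← neg_neg S, ← hE₁]; abel
    have hZ₂ : Z₂ᴴ = Z₂ + S := by rw [← neg_neg S, ← hE₂]; abel
    have hL : sylvesterMap M (-Mᴴ) (Z₁ - Z₂) =
        (M * Z₁ + Z₁ᴴ * Mᴴ) - (M * Z₂ + Z₂ᴴ * Mᴴ) := by
      rw [hZ₁, hZ₂, sylvesterMap_apply]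
      noncomm_ring
    rw [hA₁, hA₂, sub_self] at hL
    exact sub_eq_zero.mp (hM.injective (by rw [hL, map_zero]))

end Matrix

/-- The pencils share the eigenvalue `∞` exactly when `det E_Δ = 0`, which `hinf` excludes. -/
theorem unique_solution_coupled_sylvester (n : ℕ)
    (AΔ EΔ : Matrix (Fin n) (Fin n) ℂ)
    (hinf : EΔ.det ≠ 0)
    (hfin : ∀ lam : ℂ, ¬((lam • EΔ - AΔ).det = 0 ∧ (lam • (-EΔᴴ) - AΔᴴ).det = 0))
    (Δ𝓔 Δ𝓐 : Matrix (Fin n) (Fin n) ℂ)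
    (hΔ𝓔 : Δ𝓔ᴴ = -Δ𝓔) (hΔ𝓐 : Δ𝓐ᴴ = Δ𝓐) :
    ∃! Y : Matrix (Fin n) (Fin n) ℂ,
      AΔ * Y + Yᴴ * AΔᴴ = -Δ𝓐 ∧ EΔ * Y - Yᴴ * EΔᴴ = -Δ𝓔 := by
  have hE : IsUnit EΔ.det := isUnit_iff_ne_zero.mpr hinf
  set M := AΔ * EΔ⁻¹ with hM
  have hspec : Disjoint (spectrum ℂ M) (spectrum ℂ (-Mᴴ)) := by
    refine Set.disjoint_left.mpr fun μ hμ₁ hμ₂ =>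
      hfin μ ⟨(mem_spectrum_mul_inv_iff hE μ).mp hμ₁, ?_⟩
    rw [hM, conjTranspose_mul, conjTranspose_nonsing_inv, ← Matrix.mul_neg,
      mem_spectrum_inv_mul_iff (by simpa [det_conjTranspose] using hE)] at hμ₂
    rw [show μ • -EΔᴴ - AΔᴴ = -(μ • EΔᴴ - -AΔᴴ) by rw [smul_neg]; abel, det_neg, hμ₂,
      mul_zero]
  have hsubst : ∀ Y : Matrix (Fin n) (Fin n) ℂ,
      (AΔ * Y + Yᴴ * AΔᴴ = -Δ𝓐 ∧ EΔ * Y - Yᴴ * EΔᴴ = -Δ𝓔) ↔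
        (M * (EΔ * Y) + (EΔ * Y)ᴴ * Mᴴ = -Δ𝓐 ∧ EΔ * Y - (EΔ * Y)ᴴ = -Δ𝓔) := by
    intro Y
    have hAY : M * (EΔ * Y) = AΔ * Y := by rw [hM, mul_assoc, nonsing_inv_mul_cancel_left _ _ hE]
    rw [← conjTranspose_mul M, hAY, conjTranspose_mul, conjTranspose_mul]
  rw [existsUnique_congr hsubst]
  exact (Units.mulLeft (nonsingInvUnit EΔ hE)).bijective.existsUnique_iff.mp
    (existsUnique_coupled_of_bijective_sylvesterMap (sylvesterMap_bijective hspec) hΔ𝓐 hΔ𝓔)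
end
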